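/- arXiv:1802.02019 — 2 statements merged into one kernel-verified Lean document; each statement's English description precedes it below -/
import Mathlib

section
/- Suppose that for every matrix-valued function Z ∈ (C^{n+r,α})^{m×m} one has the convergence Z^{(r)} + Σ_{j=1}^{r} A_{r−j}(·,ε) Z^{(r−j)} → Z^{(r)} + Σ_{j=1}^{r} A_{r−j}(·,0) Z^{(r−j)} in (C^{n,α})^{m×m} as ε → 0+. Then A_{r−j}(·,ε) → A_{r−j}(·,0) in (C^{n,α})^{m×m} as ε → 0+ for every j ∈ {1,…,r}. -/
open Set Filter Topology

noncomputable section

/-- `x` belongs to the Hölder space `C^{n,α}([a,b],ℂ)`: it is `n` times continuously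
differentiable on `[a,b]` and the Hölder seminorm of `x⁽ⁿ⁾` is finite. -/
def HolMem (a b : ℝ) (n : ℕ) (α : ℝ) (x : ℝ → ℂ) : Prop :=
  ContDiffOn ℝ n x (Set.Icc a b) ∧
    ∃ C : ℝ, ∀ t₁ ∈ Set.Icc a b, ∀ t₂ ∈ Set.Icc a b, t₁ < t₂ →
      ‖iteratedDerivWithin n x (Set.Icc a b) t₂ - iteratedDerivWithin n x (Set.Icc a b) t₁‖ ≤
        C * (t₂ - t₁) ^ α

/-- The Hölder seminorm `‖x‖'_{n,α}`. -/
def holSemiNorm (a b : ℝ) (n : ℕ) (α : ℝ) (x : ℝ → ℂ) : ℝ :=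
  sSup { s : ℝ | ∃ t₁ ∈ Set.Icc a b, ∃ t₂ ∈ Set.Icc a b, t₁ < t₂ ∧
    s = ‖iteratedDerivWithin n x (Set.Icc a b) t₂ - iteratedDerivWithin n x (Set.Icc a b) t₁‖ /
        (t₂ - t₁) ^ α }

/-- The Hölder norm `‖x‖_{n,α} = ∑_{j=0}^n max_{[a,b]} |x⁽ʲ⁾| + ‖x‖'_{n,α}`. -/
def holNorm (a b : ℝ) (n : ℕ) (α : ℝ) (x : ℝ → ℂ) : ℝ :=
  (∑ j ∈ Finset.range (n + 1),
      sSup { s : ℝ | ∃ t ∈ Set.Icc a b, s = ‖iteratedDerivWithin j x (Set.Icc a b) t‖ }) +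
    holSemiNorm a b n α x

/-- Vector-valued Hölder class `(C^{n,α})^k`. -/
def vHolMem (a b : ℝ) (n : ℕ) (α : ℝ) {k : ℕ} (x : ℝ → (Fin k → ℂ)) : Prop :=
  ∀ i, HolMem a b n α (fun t => x t i)

/-- Norm on `(C^{n,α})^k`: the sum of the norms of the entries. -/
def vHolNorm (a b : ℝ) (n : ℕ) (α : ℝ) {k : ℕ} (x : ℝ → (Fin k → ℂ)) : ℝ :=
  ∑ i, holNorm a b n α (fun t => x t i)

/-- Matrix-valued Hölder class `(C^{n,α})^{k×l}`. -/
def mHolMem (a b : ℝ) (n : ℕ) (α : ℝ) {k l : ℕ} (X : ℝ → Matrix (Fin k) (Fin l) ℂ) : Prop :=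
  ∀ i j, HolMem a b n α (fun t => X t i j)

/-- Norm on `(C^{n,α})^{k×l}`: the sum of the norms of the entries. -/
def mHolNorm (a b : ℝ) (n : ℕ) (α : ℝ) {k l : ℕ} (X : ℝ → Matrix (Fin k) (Fin l) ℂ) : ℝ :=
  ∑ i, ∑ j, holNorm a b n α (fun t => X t i j)

/-- Entrywise `p`-th derivative of a vector-valued function on `[a,b]`. -/
def vDeriv (a b : ℝ) (p : ℕ) {k : ℕ} (y : ℝ → (Fin k → ℂ)) : ℝ → (Fin k → ℂ) :=
  fun t i => iteratedDerivWithin p (fun s => y s i) (Set.Icc a b) t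

/-- Entrywise `p`-th derivative of a matrix-valued function on `[a,b]`. -/
def mDeriv (a b : ℝ) (p : ℕ) {k l : ℕ} (Y : ℝ → Matrix (Fin k) (Fin l) ℂ) :
    ℝ → Matrix (Fin k) (Fin l) ℂ :=
  fun t i j => iteratedDerivWithin p (fun s => Y s i j) (Set.Icc a b) t

/-- The differential expression `(L y)(t) = y⁽ʳ⁾(t) + ∑_{j=1}^r A_{r-j}(t) y⁽ʳ⁻ʲ⁾(t)`;
here `A j` denotes the coefficient matrix of `y⁽ʲ⁾`, for `0 ≤ j ≤ r-1`. -/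
def Lop (a b : ℝ) (r : ℕ) {m : ℕ} (A : Fin r → ℝ → Matrix (Fin m) (Fin m) ℂ)
    (y : ℝ → (Fin m → ℂ)) : ℝ → (Fin m → ℂ) :=
  fun t => vDeriv a b r y t + ∑ j : Fin r, (A j t).mulVec (vDeriv a b (j : ℕ) y t)

/-- The matrix analogue of `Lop`, applied to matrix-valued functions. -/
def LopM (a b : ℝ) (r : ℕ) {m k : ℕ} (A : Fin r → ℝ → Matrix (Fin m) (Fin m) ℂ)
    (Z : ℝ → Matrix (Fin m) (Fin k) ℂ) : ℝ → Matrix (Fin m) (Fin k) ℂ :=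
  fun t => mDeriv a b r Z t + ∑ j : Fin r, A j t * mDeriv a b (j : ℕ) Z t

/-- `y` is a solution in `(C^{n+r,α})^m` of the problem `L y = f` on `[a,b]`, `B y = c`. -/
def IsSol (a b : ℝ) (n : ℕ) (α : ℝ) (r m : ℕ)
    (A : Fin r → ℝ → Matrix (Fin m) (Fin m) ℂ)
    (B : (ℝ → (Fin m → ℂ)) →ₗ[ℂ] (Fin (r * m) → ℂ))
    (f : ℝ → (Fin m → ℂ)) (c : Fin (r * m) → ℂ) (y : ℝ → (Fin m → ℂ)) : Prop :=
  vHolMem a b (n + r) α y ∧ (∀ t ∈ Set.Icc a b, Lop a b r A y t = f t) ∧ B y = c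

/-- Limit Condition (I): `A_{r-j}(·,ε) → A_{r-j}(·,0)` in `(C^{n,α})^{m×m}` as `ε → 0+`. -/
def CondI (a b : ℝ) (n : ℕ) (α : ℝ) (r m : ℕ)
    (A : ℝ → Fin r → ℝ → Matrix (Fin m) (Fin m) ℂ) : Prop :=
  ∀ j : Fin r,
    Tendsto (fun ε => mHolNorm a b n α (fun t => A ε j t - A 0 j t))
      (nhdsWithin 0 (Set.Ioi 0)) (nhds 0)

/-- Limit Condition (II): `B(ε)y → B(0)y` in `ℂ^{rm}` as `ε → 0+`,
for every `y ∈ (C^{n+r,α})^m`. -/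
def CondII (a b : ℝ) (n : ℕ) (α : ℝ) (r m : ℕ)
    (B : ℝ → (ℝ → (Fin m → ℂ)) →ₗ[ℂ] (Fin (r * m) → ℂ)) : Prop :=
  ∀ y : ℝ → (Fin m → ℂ), vHolMem a b (n + r) α y →
    Tendsto (fun ε => B ε y) (nhdsWithin 0 (Set.Ioi 0)) (nhds (B 0 y))

/-- Condition (0): the homogeneous problem `L(0)y = 0`, `B(0)y = 0` has only the
trivial solution in `(C^{n+r,α})^m`. -/
def Cond0 (a b : ℝ) (n : ℕ) (α : ℝ) (r m : ℕ)
    (A : Fin r → ℝ → Matrix (Fin m) (Fin m) ℂ)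
    (B : (ℝ → (Fin m → ℂ)) →ₗ[ℂ] (Fin (r * m) → ℂ)) : Prop :=
  ∀ y : ℝ → (Fin m → ℂ), vHolMem a b (n + r) α y →
    (∀ t ∈ Set.Icc a b, Lop a b r A y t = 0) → B y = 0 →
    ∀ t ∈ Set.Icc a b, y t = 0

/-- Condition (∗): for every `ε ∈ [0,ε₁)` and arbitrary data `f ∈ (C^{n,α})^m`, `c ∈ ℂ^{rm}`,
the problem `L(ε)y = f`, `B(ε)y = c` has a unique solution `y ∈ (C^{n+r,α})^m`
(uniqueness is understood as equality on `[a,b]`). -/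
def CondStar (a b : ℝ) (n : ℕ) (α : ℝ) (r m : ℕ) (ε₁ : ℝ)
    (A : ℝ → Fin r → ℝ → Matrix (Fin m) (Fin m) ℂ)
    (B : ℝ → (ℝ → (Fin m → ℂ)) →ₗ[ℂ] (Fin (r * m) → ℂ)) : Prop :=
  ∀ ε ∈ Set.Ico (0 : ℝ) ε₁, ∀ f : ℝ → (Fin m → ℂ), vHolMem a b n α f →
    ∀ c : Fin (r * m) → ℂ,
      ∃ y, IsSol a b n α r m (A ε) (B ε) f c y ∧
        ∀ y', IsSol a b n α r m (A ε) (B ε) f c y' → Set.EqOn y' y (Set.Icc a b)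

/-- Condition (∗∗): if `f(·,ε) → f(·,0)` in `(C^{n,α})^m` and `c(ε) → c(0)` in `ℂ^{rm}`
as `ε → 0+`, then the solutions satisfy `y(·,ε) → y(·,0)` in `(C^{n+r,α})^m`. -/
def CondStarStar (a b : ℝ) (n : ℕ) (α : ℝ) (r m : ℕ) (ε₁ : ℝ)
    (A : ℝ → Fin r → ℝ → Matrix (Fin m) (Fin m) ℂ)
    (B : ℝ → (ℝ → (Fin m → ℂ)) →ₗ[ℂ] (Fin (r * m) → ℂ)) : Prop :=
  ∀ (f : ℝ → ℝ → (Fin m → ℂ)) (c : ℝ → Fin (r * m) → ℂ) (y : ℝ → ℝ → (Fin m → ℂ)),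
    (∀ ε ∈ Set.Ico (0 : ℝ) ε₁, vHolMem a b n α (f ε) ∧
      IsSol a b n α r m (A ε) (B ε) (f ε) (c ε) (y ε)) →
    Tendsto (fun ε => vHolNorm a b n α (fun t => f ε t - f 0 t))
      (nhdsWithin 0 (Set.Ioi 0)) (nhds 0) →
    Tendsto c (nhdsWithin 0 (Set.Ioi 0)) (nhds (c 0)) →
    Tendsto (fun ε => vHolNorm a b (n + r) α (fun t => y ε t - y 0 t))
      (nhdsWithin 0 (Set.Ioi 0)) (nhds 0)

/-!
Write `Cⱼ(ε) = A_j(·,ε) - A_j(·,0)`. Testing the hypothesis on `Z(t) = tᵖ • 1`, whose `j`-th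
derivative is `p!/(p-j)! t^(p-j) • 1`, shows that `∑_{j ≤ p} p!/(p-j)! t^(p-j) • Cⱼ(ε) → 0` in
`C^{n,α}`. Multiplication by `t` is bounded on `C^{n,α}([a,b])` (Leibniz rule plus the mean value
theorem for the lower-order term), so by strong induction on `p` every term with `j < p` tends
to `0`, hence so does `p! • Cₚ(ε)`.
-/

def derivSupNorm (a b : ℝ) (j : ℕ) (x : ℝ → ℂ) : ℝ :=
  sSup {s : ℝ | ∃ t ∈ Icc a b, s = ‖iteratedDerivWithin j x (Icc a b) t‖}

def HolderBound (a b : ℝ) (n : ℕ) (α : ℝ) (x : ℝ → ℂ) (C : ℝ) : Prop :=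
  ∀ t₁ ∈ Icc a b, ∀ t₂ ∈ Icc a b, t₁ < t₂ →
    ‖iteratedDerivWithin n x (Icc a b) t₂ - iteratedDerivWithin n x (Icc a b) t₁‖ ≤
      C * (t₂ - t₁) ^ α

section HolderNorm

variable {a b : ℝ} {n j : ℕ} {α C : ℝ} {x y : ℝ → ℂ}

theorem holNorm_eq (a b : ℝ) (n : ℕ) (α : ℝ) (x : ℝ → ℂ) :
    holNorm a b n α x =
      ∑ j ∈ Finset.range (n + 1), derivSupNorm a b j x + holSemiNorm a b n α x :=
  rfl

theorem derivSupNorm_nonneg (a b : ℝ) (j : ℕ) (x : ℝ → ℂ) : 0 ≤ derivSupNorm a b j x :=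
  Real.sSup_nonneg (by rintro s ⟨t, -, rfl⟩; positivity)

theorem holSemiNorm_nonneg (a b : ℝ) (n : ℕ) (α : ℝ) (x : ℝ → ℂ) :
    0 ≤ holSemiNorm a b n α x :=
  Real.sSup_nonneg (by
    rintro s ⟨t₁, -, t₂, -, hlt, rfl⟩
    exact div_nonneg (norm_nonneg _) (Real.rpow_nonneg (sub_nonneg.2 hlt.le) _))

theorem holNorm_nonneg (a b : ℝ) (n : ℕ) (α : ℝ) (x : ℝ → ℂ) : 0 ≤ holNorm a b n α x :=
  add_nonneg (Finset.sum_nonneg fun j _ => derivSupNorm_nonneg a b j x)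
    (holSemiNorm_nonneg a b n α x)

theorem derivSupNorm_le_holNorm (hj : j ≤ n) : derivSupNorm a b j x ≤ holNorm a b n α x :=
  (Finset.single_le_sum (fun i _ => derivSupNorm_nonneg a b i x)
      (Finset.mem_range.2 (Nat.lt_succ_of_le hj))).trans
    (le_add_of_nonneg_right (holSemiNorm_nonneg a b n α x))

theorem holSemiNorm_le_holNorm : holSemiNorm a b n α x ≤ holNorm a b n α x :=
  le_add_of_nonneg_left (Finset.sum_nonneg fun j _ => derivSupNorm_nonneg a b j x)

theorem norm_iteratedDerivWithin_le_derivSupNorm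
    (hx : ContinuousOn (iteratedDerivWithin j x (Icc a b)) (Icc a b)) {t : ℝ}
    (ht : t ∈ Icc a b) : ‖iteratedDerivWithin j x (Icc a b) t‖ ≤ derivSupNorm a b j x := by
  obtain ⟨C, hC⟩ := isCompact_Icc.exists_bound_of_continuousOn hx
  exact le_csSup ⟨C, by rintro s ⟨u, hu, rfl⟩; exact hC u hu⟩ ⟨t, ht, rfl⟩

theorem HolMem.norm_iteratedDerivWithin_le_holNorm (hab : a < b) (hx : HolMem a b n α x)
    (hj : j ≤ n) {t : ℝ} (ht : t ∈ Icc a b) :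
    ‖iteratedDerivWithin j x (Icc a b) t‖ ≤ holNorm a b n α x :=
  (norm_iteratedDerivWithin_le_derivSupNorm
    (hx.1.continuousOn_iteratedDerivWithin (by exact_mod_cast hj) (uniqueDiffOn_Icc hab))
    ht).trans (derivSupNorm_le_holNorm hj)

theorem HolMem.holderBound (hx : HolMem a b n α x) :
    HolderBound a b n α x (holSemiNorm a b n α x) := by
  obtain ⟨C, hC⟩ := hx.2
  intro t₁ h₁ t₂ h₂ hlt
  have hpos : 0 < (t₂ - t₁) ^ α := Real.rpow_pos_of_pos (sub_pos.2 hlt) α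
  rw [← div_le_iff₀ hpos]
  refine le_csSup ⟨C, ?_⟩ ⟨t₁, h₁, t₂, h₂, hlt, rfl⟩
  rintro s ⟨u₁, hu₁, u₂, hu₂, hu, rfl⟩
  rw [div_le_iff₀ (Real.rpow_pos_of_pos (sub_pos.2 hu) α)]
  exact hC u₁ hu₁ u₂ hu₂ hu

theorem holNorm_le_of_forall_le (hab : a < b) {c : ℕ → ℝ}
    (hc : ∀ j ≤ n, ∀ t ∈ Icc a b, ‖iteratedDerivWithin j x (Icc a b) t‖ ≤ c j)
    (hC : HolderBound a b n α x C) :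
    holNorm a b n α x ≤ ∑ j ∈ Finset.range (n + 1), c j + C := by
  have ha : a ∈ Icc a b := left_mem_Icc.2 hab.le
  have hb : b ∈ Icc a b := right_mem_Icc.2 hab.le
  refine add_le_add (Finset.sum_le_sum fun j hj => ?_) ?_
  · refine csSup_le ⟨_, a, ha, rfl⟩ ?_
    rintro s ⟨t, ht, rfl⟩
    exact hc j (Nat.lt_succ_iff.1 (Finset.mem_range.1 hj)) t ht
  · refine csSup_le ⟨_, a, ha, b, hb, hab, rfl⟩ ?_
    rintro s ⟨t₁, h₁, t₂, h₂, hlt, rfl⟩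
    rw [div_le_iff₀ (Real.rpow_pos_of_pos (sub_pos.2 hlt) α)]
    exact hC t₁ h₁ t₂ h₂ hlt

theorem holNorm_congr (h : EqOn x y (Icc a b)) : holNorm a b n α x = holNorm a b n α y := by
  have hD : ∀ j, EqOn (iteratedDerivWithin j x (Icc a b)) (iteratedDerivWithin j y (Icc a b))
      (Icc a b) := fun j => iteratedDerivWithin_congr h
  unfold holNorm holSemiNorm
  congr 1
  · refine Finset.sum_congr rfl fun j _ => congrArg sSup (Set.ext fun s => ?_)
    exact exists_congr fun t => and_congr_right fun ht => by rw [hD j ht]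
  · refine congrArg sSup (Set.ext fun s => ?_)
    refine exists_congr fun t₁ => and_congr_right fun h₁ => exists_congr fun t₂ =>
      and_congr_right fun h₂ => ?_
    rw [hD n h₁, hD n h₂]

end HolderNorm

section Algebra

variable {a b : ℝ} {n : ℕ} {α C D : ℝ} {x y : ℝ → ℂ}

theorem HolderBound.add (hab : a < b) (hx : ContDiffOn ℝ n x (Icc a b))
    (hy : ContDiffOn ℝ n y (Icc a b)) (hCx : HolderBound a b n α x C)
    (hDy : HolderBound a b n α y D) : HolderBound a b n α (fun t => x t + y t) (C + D) := by
  intro t₁ h₁ t₂ h₂ hlt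
  simp only [iteratedDerivWithin_fun_add h₁ (uniqueDiffOn_Icc hab) (hx t₁ h₁) (hy t₁ h₁),
    iteratedDerivWithin_fun_add h₂ (uniqueDiffOn_Icc hab) (hx t₂ h₂) (hy t₂ h₂),
    add_sub_add_comm, add_mul]
  exact (norm_add_le _ _).trans (add_le_add (hCx t₁ h₁ t₂ h₂ hlt) (hDy t₁ h₁ t₂ h₂ hlt))

theorem HolderBound.const_smul (c : ℝ) (hCx : HolderBound a b n α x C) :
    HolderBound a b n α (fun t => c • x t) (|c| * C) := by
  intro t₁ h₁ t₂ h₂ hlt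
  rw [iteratedDerivWithin_fun_const_smul_field, iteratedDerivWithin_fun_const_smul_field,
    ← smul_sub, norm_smul, Real.norm_eq_abs, mul_assoc]
  exact mul_le_mul_of_nonneg_left (hCx t₁ h₁ t₂ h₂ hlt) (abs_nonneg c)

theorem HolMem.add (hab : a < b) (hx : HolMem a b n α x) (hy : HolMem a b n α y) :
    HolMem a b n α (fun t => x t + y t) :=
  ⟨hx.1.add hy.1, _, hx.holderBound.add hab hx.1 hy.1 hy.holderBound⟩

theorem HolMem.const_smul (c : ℝ) (hx : HolMem a b n α x) :
    HolMem a b n α (fun t => c • x t) :=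
  ⟨hx.1.const_smul c, _, hx.holderBound.const_smul c⟩

theorem HolMem.sub (hab : a < b) (hx : HolMem a b n α x) (hy : HolMem a b n α y) :
    HolMem a b n α (fun t => x t - y t) := by
  simpa [sub_eq_add_neg] using hx.add hab (hy.const_smul (-1))

theorem holderBound_zero : HolderBound a b n α (fun _ => 0) 0 :=
  fun _ _ _ _ _ => by simp

theorem HolMem.zero : HolMem a b n α (fun _ => 0) :=
  ⟨contDiffOn_const, 0, holderBound_zero⟩

theorem holNorm_zero (hab : a < b) : holNorm a b n α (fun _ => 0) = 0 :=
  le_antisymm (by simpa using holNorm_le_of_forall_le (c := 0) hab (by simp) holderBound_zero)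
    (holNorm_nonneg a b n α _)

theorem holNorm_add_le (hab : a < b) (hx : HolMem a b n α x) (hy : HolMem a b n α y) :
    holNorm a b n α (fun t => x t + y t) ≤ holNorm a b n α x + holNorm a b n α y := by
  have hbound : ∀ j ≤ n, ∀ t ∈ Icc a b, ‖iteratedDerivWithin j (fun t => x t + y t) (Icc a b) t‖ ≤
      derivSupNorm a b j x + derivSupNorm a b j y := by
    intro j hj t ht
    have hjn : (j : WithTop ℕ∞) ≤ n := by exact_mod_cast hj
    rw [iteratedDerivWithin_fun_add ht (uniqueDiffOn_Icc hab) (hx.1.of_le hjn t ht)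
      (hy.1.of_le hjn t ht)]
    exact (norm_add_le _ _).trans (add_le_add
      (norm_iteratedDerivWithin_le_derivSupNorm
        (hx.1.continuousOn_iteratedDerivWithin hjn (uniqueDiffOn_Icc hab)) ht)
      (norm_iteratedDerivWithin_le_derivSupNorm
        (hy.1.continuousOn_iteratedDerivWithin hjn (uniqueDiffOn_Icc hab)) ht))
  refine (holNorm_le_of_forall_le hab hbound
    (hx.holderBound.add hab hx.1 hy.1 hy.holderBound)).trans_eq ?_
  rw [holNorm_eq, holNorm_eq, Finset.sum_add_distrib]
  ring

theorem holNorm_const_smul_le (hab : a < b) (c : ℝ) (hx : HolMem a b n α x) :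
    holNorm a b n α (fun t => c • x t) ≤ |c| * holNorm a b n α x := by
  have hbound : ∀ j ≤ n, ∀ t ∈ Icc a b, ‖iteratedDerivWithin j (fun t => c • x t) (Icc a b) t‖ ≤
      |c| * derivSupNorm a b j x := by
    intro j hj t ht
    rw [iteratedDerivWithin_fun_const_smul_field, norm_smul, Real.norm_eq_abs]
    exact mul_le_mul_of_nonneg_left (norm_iteratedDerivWithin_le_derivSupNorm
      (hx.1.continuousOn_iteratedDerivWithin (by exact_mod_cast hj) (uniqueDiffOn_Icc hab)) ht)
      (abs_nonneg c)
  refine (holNorm_le_of_forall_le hab hbound (hx.holderBound.const_smul c)).trans_eq ?_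
  rw [holNorm_eq, mul_add, Finset.mul_sum]

theorem holNorm_sub_le (hab : a < b) (hx : HolMem a b n α x) (hy : HolMem a b n α y) :
    holNorm a b n α (fun t => x t - y t) ≤ holNorm a b n α x + holNorm a b n α y := by
  have hneg : (fun t => x t - y t) = fun t => x t + (-1 : ℝ) • y t := by
    funext t; rw [neg_one_smul, sub_eq_add_neg]
  calc holNorm a b n α (fun t => x t - y t)
      ≤ holNorm a b n α x + holNorm a b n α (fun t => (-1 : ℝ) • y t) :=
        hneg ▸ holNorm_add_le hab hx (hy.const_smul (-1))
    _ ≤ holNorm a b n α x + holNorm a b n α y := by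
        simpa using holNorm_const_smul_le hab (-1) hy

end Algebra

theorem le_rpow_one_sub_mul_rpow {Δ L α : ℝ} (hΔ : 0 < Δ) (hΔL : Δ ≤ L) (hα : α ≤ 1) :
    Δ ≤ L ^ (1 - α) * Δ ^ α := by
  calc Δ = Δ ^ (1 - α) * Δ ^ α := by rw [← Real.rpow_add hΔ, sub_add_cancel, Real.rpow_one]
    _ ≤ L ^ (1 - α) * Δ ^ α := by gcongr

section MulId

variable {a b : ℝ} {n q : ℕ} {α C : ℝ} {x : ℝ → ℂ}

theorem norm_iteratedDerivWithin_sub_le (hab : a < b) (hx : ContDiffOn ℝ (q + 1) x (Icc a b))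
    (hC : ∀ t ∈ Icc a b, ‖iteratedDerivWithin (q + 1) x (Icc a b) t‖ ≤ C) {t₁ t₂ : ℝ}
    (h₁ : t₁ ∈ Icc a b) (h₂ : t₂ ∈ Icc a b) :
    ‖iteratedDerivWithin q x (Icc a b) t₂ - iteratedDerivWithin q x (Icc a b) t₁‖ ≤
      C * ‖t₂ - t₁‖ := by
  refine (convex_Icc a b).norm_image_sub_le_of_norm_derivWithin_le
    (hx.differentiableOn_iteratedDerivWithin (by exact_mod_cast q.lt_succ_self)
      (uniqueDiffOn_Icc hab)) (fun t ht => ?_) h₁ h₂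
  rw [← iteratedDerivWithin_succ]
  exact hC t ht

theorem HolMem.of_contDiffOn (hab : a < b) (hα : α ≤ 1) (hx : ContDiffOn ℝ (n + 1) x (Icc a b)) :
    HolMem a b n α x := by
  obtain ⟨C, hC⟩ := isCompact_Icc.exists_bound_of_continuousOn
    (hx.continuousOn_iteratedDerivWithin le_rfl (uniqueDiffOn_Icc hab))
  have hC0 : 0 ≤ C := (norm_nonneg _).trans (hC a (left_mem_Icc.2 hab.le))
  refine ⟨hx.of_le (by exact_mod_cast n.le_succ), C * (b - a) ^ (1 - α),
    fun t₁ h₁ t₂ h₂ hlt => ?_⟩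
  calc _ ≤ C * ‖t₂ - t₁‖ := norm_iteratedDerivWithin_sub_le hab hx hC h₁ h₂
    _ ≤ C * ((b - a) ^ (1 - α) * (t₂ - t₁) ^ α) := by
        rw [Real.norm_of_nonneg (sub_nonneg.2 hlt.le)]
        exact mul_le_mul_of_nonneg_left (le_rpow_one_sub_mul_rpow (sub_pos.2 hlt)
          (by linarith [h₁.1, h₂.2]) hα) hC0
    _ = C * (b - a) ^ (1 - α) * (t₂ - t₁) ^ α := by ring

theorem iteratedDerivWithin_id_smul (hab : a < b) {N j : ℕ} (hx : ContDiffOn ℝ N x (Icc a b))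
    (hj : j ≤ N) {t : ℝ} (ht : t ∈ Icc a b) :
    iteratedDerivWithin j (fun s => s • x s) (Icc a b) t =
      t • iteratedDerivWithin j x (Icc a b) t +
        (j : ℝ) • iteratedDerivWithin (j - 1) x (Icc a b) t := by
  have hLeibniz := iteratedDerivWithin_smul (f := id) ht (uniqueDiffOn_Icc hab)
    contDiffWithinAt_id ((hx.of_le (by exact_mod_cast hj)) t ht)
  rcases j with _ | j
  · simp
  · rw [show (fun s => s • x s) = (id : ℝ → ℝ) • x from rfl, hLeibniz,
      Finset.sum_range_succ', Finset.sum_range_succ']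
    simp [iteratedDerivWithin_id ht (uniqueDiffOn_Icc hab)]
    ring

theorem HolMem.holderBound_id_smul (hab : a < b) (hα : α ≤ 1) (hx : HolMem a b n α x) :
    HolderBound a b n α (fun s => s • x s)
      ((max |a| |b| + (n + 1) * (b - a) ^ (1 - α)) * holNorm a b n α x) := by
  intro t₁ h₁ t₂ h₂ hlt
  set N := holNorm a b n α x
  set u := iteratedDerivWithin n x (Icc a b)
  set v := iteratedDerivWithin (n - 1) x (Icc a b)
  have hΔ : t₂ - t₁ ≤ (b - a) ^ (1 - α) * (t₂ - t₁) ^ α :=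
    le_rpow_one_sub_mul_rpow (sub_pos.2 hlt) (by linarith [h₁.1, h₂.2]) hα
  have hu : ‖t₂ • (u t₂ - u t₁)‖ ≤ max |a| |b| * (N * (t₂ - t₁) ^ α) := by
    rw [norm_smul, Real.norm_eq_abs]
    exact mul_le_mul (abs_le_max_abs_abs h₂.1 h₂.2)
      ((hx.holderBound t₁ h₁ t₂ h₂ hlt).trans (by gcongr; exact holSemiNorm_le_holNorm))
      (norm_nonneg _) ((abs_nonneg _).trans (abs_le_max_abs_abs h₂.1 h₂.2))
  have hΔu : ‖(t₂ - t₁) • u t₁‖ ≤ (t₂ - t₁) * N := by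
    rw [norm_smul, Real.norm_of_nonneg (sub_nonneg.2 hlt.le)]
    exact mul_le_mul_of_nonneg_left (hx.norm_iteratedDerivWithin_le_holNorm hab le_rfl h₁)
      (sub_nonneg.2 hlt.le)
  have hv : ‖(n : ℝ) • (v t₂ - v t₁)‖ ≤ n * ((t₂ - t₁) * N) := by
    rw [norm_smul, Real.norm_natCast]
    rcases n with _ | k
    · simp
    · refine mul_le_mul_of_nonneg_left ?_ (Nat.cast_nonneg _)
      rw [mul_comm, ← Real.norm_of_nonneg (sub_nonneg.2 hlt.le)]
      exact norm_iteratedDerivWithin_sub_le hab hx.1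
        (fun t ht => hx.norm_iteratedDerivWithin_le_holNorm hab le_rfl ht) h₁ h₂
  have hN : 0 ≤ N := holNorm_nonneg a b n α x
  rw [iteratedDerivWithin_id_smul hab hx.1 le_rfl h₁, iteratedDerivWithin_id_smul hab hx.1 le_rfl h₂]
  calc ‖(t₂ • u t₂ + (n : ℝ) • v t₂) - (t₁ • u t₁ + (n : ℝ) • v t₁)‖
      = ‖t₂ • (u t₂ - u t₁) + (t₂ - t₁) • u t₁ + (n : ℝ) • (v t₂ - v t₁)‖ := by
        congr 1; simp only [smul_sub, sub_smul]; abel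
    _ ≤ max |a| |b| * (N * (t₂ - t₁) ^ α) + (t₂ - t₁) * N + n * ((t₂ - t₁) * N) :=
        (norm_add₃_le).trans (add_le_add_three hu hΔu hv)
    _ = max |a| |b| * N * (t₂ - t₁) ^ α + (n + 1) * N * (t₂ - t₁) := by ring
    _ ≤ max |a| |b| * N * (t₂ - t₁) ^ α + (n + 1) * N * ((b - a) ^ (1 - α) * (t₂ - t₁) ^ α) := by
        gcongr
    _ = _ := by ring

theorem HolMem.id_smul (hab : a < b) (hα : α ≤ 1) (hx : HolMem a b n α x) :
    HolMem a b n α (fun s => s • x s) :=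
  ⟨contDiffOn_id.smul hx.1, _, hx.holderBound_id_smul hab hα⟩

theorem holNorm_id_smul_le (hab : a < b) (hα : α ≤ 1) (hx : HolMem a b n α x) :
    holNorm a b n α (fun s => s • x s) ≤
      ((n + 1) * (max |a| |b| + n) + max |a| |b| + (n + 1) * (b - a) ^ (1 - α)) *
        holNorm a b n α x := by
  set N := holNorm a b n α x
  have hbound : ∀ j ≤ n, ∀ t ∈ Icc a b,
      ‖iteratedDerivWithin j (fun s => s • x s) (Icc a b) t‖ ≤ (max |a| |b| + n) * N := by
    intro j hj t ht
    rw [iteratedDerivWithin_id_smul hab hx.1 hj ht, add_mul]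
    refine (norm_add_le _ _).trans (add_le_add ?_ ?_) <;> rw [norm_smul]
    · exact mul_le_mul (abs_le_max_abs_abs ht.1 ht.2)
        (hx.norm_iteratedDerivWithin_le_holNorm hab hj ht) (norm_nonneg _)
        ((abs_nonneg _).trans (abs_le_max_abs_abs ht.1 ht.2))
    · rw [Real.norm_natCast]
      exact mul_le_mul (by exact_mod_cast hj)
        (hx.norm_iteratedDerivWithin_le_holNorm hab (j.sub_le 1 |>.trans hj) ht) (norm_nonneg _)
        (Nat.cast_nonneg n)
  refine (holNorm_le_of_forall_le hab hbound (hx.holderBound_id_smul hab hα)).trans_eq ?_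
  rw [Finset.sum_const, Finset.card_range, nsmul_eq_mul]
  push_cast
  ring

end MulId

/-- Membership is built in because `holNorm` takes junk values outside `C^{n,α}`. -/
def HolTendstoZero (a b : ℝ) (n : ℕ) (α : ℝ) {ι : Type*} (l : Filter ι) (F : ι → ℝ → ℂ) :
    Prop :=
  (∀ᶠ ε in l, HolMem a b n α (F ε)) ∧ Tendsto (fun ε => holNorm a b n α (F ε)) l (𝓝 0)

namespace HolTendstoZero

variable {a b : ℝ} {n : ℕ} {α : ℝ} {ι : Type*} {l : Filter ι} {F G : ι → ℝ → ℂ}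

theorem of_holNorm_le {g : ι → ℝ} (hF : ∀ᶠ ε in l, HolMem a b n α (F ε))
    (hg : Tendsto g l (𝓝 0)) (hle : ∀ᶠ ε in l, holNorm a b n α (F ε) ≤ g ε) :
    HolTendstoZero a b n α l F :=
  ⟨hF, squeeze_zero' (Eventually.of_forall fun _ => holNorm_nonneg a b n α _) hle hg⟩

theorem zero (hab : a < b) : HolTendstoZero a b n α l (fun _ _ => 0) :=
  ⟨Eventually.of_forall fun _ => HolMem.zero, by simp only [holNorm_zero hab, tendsto_const_nhds]⟩

theorem add (hab : a < b) (hF : HolTendstoZero a b n α l F) (hG : HolTendstoZero a b n α l G) :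
    HolTendstoZero a b n α l (fun ε t => F ε t + G ε t) :=
  of_holNorm_le (hF.1.and hG.1 |>.mono fun _ h => h.1.add hab h.2)
    (by simpa using hF.2.add hG.2)
    (hF.1.and hG.1 |>.mono fun _ h => holNorm_add_le hab h.1 h.2)

theorem const_smul (hab : a < b) (c : ℝ) (hF : HolTendstoZero a b n α l F) :
    HolTendstoZero a b n α l (fun ε t => c • F ε t) :=
  of_holNorm_le (hF.1.mono fun _ h => h.const_smul c) (by simpa using hF.2.const_mul |c|)
    (hF.1.mono fun _ h => holNorm_const_smul_le hab c h)

theorem sub (hab : a < b) (hF : HolTendstoZero a b n α l F) (hG : HolTendstoZero a b n α l G) :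
    HolTendstoZero a b n α l (fun ε t => F ε t - G ε t) :=
  of_holNorm_le (hF.1.and hG.1 |>.mono fun _ h => h.1.sub hab h.2)
    (by simpa using hF.2.add hG.2)
    (hF.1.and hG.1 |>.mono fun _ h => holNorm_sub_le hab h.1 h.2)

theorem id_smul (hab : a < b) (hα : α ≤ 1) (hF : HolTendstoZero a b n α l F) :
    HolTendstoZero a b n α l (fun ε s => s • F ε s) :=
  of_holNorm_le (hF.1.mono fun _ h => h.id_smul hab hα) (by simpa using hF.2.const_mul _)
    (hF.1.mono fun _ h => holNorm_id_smul_le hab hα h)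

theorem pow_smul (hab : a < b) (hα : α ≤ 1) (hF : HolTendstoZero a b n α l F) (q : ℕ) :
    HolTendstoZero a b n α l (fun ε s => s ^ q • F ε s) := by
  induction q with
  | zero => simpa using hF
  | succ q ih => simpa only [pow_succ', mul_smul] using ih.id_smul hab hα

theorem sum (hab : a < b) {κ : Type*} (s : Finset κ) {F : κ → ι → ℝ → ℂ}
    (hF : ∀ i ∈ s, HolTendstoZero a b n α l (F i)) :
    HolTendstoZero a b n α l (fun ε t => ∑ i ∈ s, F i ε t) := by
  classical
  induction s using Finset.induction_on with
  | empty => simpa using zero hab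
  | insert i s hi ih =>
    simp only [Finset.sum_insert hi]
    exact (hF i (s.mem_insert_self i)).add hab (ih fun j hj => hF j (Finset.mem_insert_of_mem hj))

end HolTendstoZero

section Matrix

variable {a b : ℝ} {n : ℕ} {α : ℝ} {k l r m : ℕ}

theorem holNorm_le_mHolNorm (X : ℝ → Matrix (Fin k) (Fin l) ℂ) (i : Fin k) (j : Fin l) :
    holNorm a b n α (fun t => X t i j) ≤ mHolNorm a b n α X :=
  (Finset.single_le_sum (f := fun j' => holNorm a b n α (fun t => X t i j'))
      (fun _ _ => holNorm_nonneg a b n α _) (Finset.mem_univ j)).trans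
    (Finset.single_le_sum (f := fun i' => ∑ j', holNorm a b n α (fun t => X t i' j'))
      (fun _ _ => Finset.sum_nonneg fun _ _ => holNorm_nonneg a b n α _) (Finset.mem_univ i))

theorem tendsto_mHolNorm_zero {ι : Type*} {L : Filter ι} {X : ι → ℝ → Matrix (Fin k) (Fin l) ℂ}
    (h : ∀ i j, Tendsto (fun ε => holNorm a b n α (fun t => X ε t i j)) L (𝓝 0)) :
    Tendsto (fun ε => mHolNorm a b n α (X ε)) L (𝓝 0) := by
  unfold mHolNorm
  simpa only [Finset.sum_const_zero] using tendsto_finsetSum Finset.univ fun i _ =>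
    tendsto_finsetSum Finset.univ fun j _ => h i j

theorem LopM_sub_LopM (A B : Fin r → ℝ → Matrix (Fin m) (Fin m) ℂ)
    (Z : ℝ → Matrix (Fin m) (Fin k) ℂ) (t : ℝ) :
    LopM a b r A Z t - LopM a b r B Z t = ∑ j, (A j t - B j t) * mDeriv a b j Z t := by
  simp only [LopM, add_sub_add_left_eq_sub, ← Finset.sum_sub_distrib, Matrix.sub_mul]

theorem mDeriv_pow_smul_one (hab : a < b) (p q : ℕ) {t : ℝ} (ht : t ∈ Icc a b) :
    mDeriv a b q (fun s : ℝ => s ^ p • (1 : Matrix (Fin m) (Fin m) ℂ)) t =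
      (p.descFactorial q * t ^ (p - q) : ℝ) • (1 : Matrix (Fin m) (Fin m) ℂ) := by
  ext i j
  simp only [mDeriv, Matrix.smul_apply]
  rw [iteratedDerivWithin_smul_const ht (uniqueDiffOn_Icc hab) (by fun_prop),
    iteratedDerivWithin_pow ht (uniqueDiffOn_Icc hab)]

theorem mHolMem_pow_smul_one (hab : a < b) (hα : α ≤ 1) (N p : ℕ) :
    mHolMem a b N α (fun s : ℝ => s ^ p • (1 : Matrix (Fin m) (Fin m) ℂ)) :=
  fun i j => HolMem.of_contDiffOn hab hα (by simp only [Matrix.smul_apply]; fun_prop)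

end Matrix

section Coefficients

variable {a b : ℝ} {n : ℕ} {α : ℝ} {r m : ℕ} {ι : Type*} {l : Filter ι}
  {C : ι → Fin r → ℝ → Matrix (Fin m) (Fin m) ℂ}

theorem holTendstoZero_coeff_of_lt (hab : a < b) (hα : α ≤ 1)
    (hC : ∀ᶠ ε in l, ∀ j i k, HolMem a b n α (fun t => C ε j t i k)) (p : Fin r)
    (hp : Tendsto (fun ε => mHolNorm a b n α (fun t => ∑ j, C ε j t *
      mDeriv a b j (fun s : ℝ => s ^ (p : ℕ) • (1 : Matrix (Fin m) (Fin m) ℂ)) t)) l (𝓝 0))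
    (hlt : ∀ j < p, ∀ i k, HolTendstoZero a b n α l (fun ε t => C ε j t i k)) (i k : Fin m) :
    HolTendstoZero a b n α l (fun ε t => C ε p t i k) := by
  set term : Fin r → ι → ℝ → ℂ :=
    fun j ε t => ((p : ℕ).descFactorial j : ℝ) • t ^ ((p : ℕ) - j) • C ε j t i k
  have hrest : HolTendstoZero a b n α l (fun ε t => ∑ j ∈ Finset.univ.erase p, term j ε t) := by
    refine HolTendstoZero.sum hab _ fun j hj => ?_
    rcases lt_or_gt_of_ne (Finset.ne_of_mem_erase hj) with hjp | hjp
    · exact ((hlt j hjp i k).pow_smul hab hα _).const_smul hab _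
    · have : ((p : ℕ).descFactorial j : ℝ) = 0 := by
        exact_mod_cast Nat.descFactorial_eq_zero_iff_lt.2 hjp
      simpa only [term, this, zero_smul] using HolTendstoZero.zero hab
  have hsplit : ∀ ε t, ∑ j, term j ε t =
      ((p : ℕ).factorial : ℝ) • C ε p t i k + ∑ j ∈ Finset.univ.erase p, term j ε t := by
    intro ε t
    rw [← Finset.add_sum_erase _ _ (Finset.mem_univ p)]
    simp [term, Nat.descFactorial_self]
  have hfull : HolTendstoZero a b n α l (fun ε t => ∑ j, term j ε t) := by
    refine .of_holNorm_le ?_ hp ?_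
    · filter_upwards [hC, hrest.1] with ε hε hr
      simpa only [hsplit] using ((hε p i k).const_smul _).add hab hr
    · refine Eventually.of_forall fun ε => le_of_eq_of_le ?_ (holNorm_le_mHolNorm _ i k)
      refine holNorm_congr fun t ht => ?_
      simp [Matrix.sum_apply, mDeriv_pow_smul_one hab _ _ ht, term, mul_smul]
  have hfact : ((p : ℕ).factorial : ℝ) ≠ 0 := by positivity
  convert (hfull.sub hab hrest).const_smul hab ((p : ℕ).factorial : ℝ)⁻¹ using 3 with ε t
  rw [hsplit, add_sub_cancel_right, smul_smul, inv_mul_cancel₀ hfact, one_smul]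

theorem holTendstoZero_coeff (hab : a < b) (hα : α ≤ 1)
    (hC : ∀ᶠ ε in l, ∀ j i k, HolMem a b n α (fun t => C ε j t i k))
    (h : ∀ p : Fin r, Tendsto (fun ε => mHolNorm a b n α (fun t => ∑ j, C ε j t *
      mDeriv a b j (fun s : ℝ => s ^ (p : ℕ) • (1 : Matrix (Fin m) (Fin m) ℂ)) t)) l (𝓝 0))
    (p : Fin r) (i k : Fin m) :
    HolTendstoZero a b n α l (fun ε t => C ε p t i k) := by
  induction p using WellFoundedLT.induction generalizing i k with
  | _ p ih => exact holTendstoZero_coeff_of_lt hab hα hC p (h p) ih i k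

end Coefficients

theorem matrix_strong_convergence_implies_condI_general
    (a b : ℝ) (hab : a < b) (n : ℕ) (α : ℝ) (hα1 : α ≤ 1)
    (m r : ℕ) (ε₀ : ℝ) (hε₀ : 0 < ε₀)
    (A : ℝ → Fin r → ℝ → Matrix (Fin m) (Fin m) ℂ)
    (hA : ∀ ε ∈ Set.Ico (0 : ℝ) ε₀, ∀ j, mHolMem a b n α (A ε j))
    (h : ∀ Z : ℝ → Matrix (Fin m) (Fin m) ℂ, mHolMem a b (n + r) α Z →
      Tendsto
        (fun ε => mHolNorm a b n α (fun t => LopM a b r (A ε) Z t - LopM a b r (A 0) Z t))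
        (nhdsWithin 0 (Set.Ioi 0)) (nhds 0)) :
    CondI a b n α r m A := by
  have hC : ∀ᶠ ε in 𝓝[>] 0, ∀ j i k, HolMem a b n α (fun t => (A ε j t - A 0 j t) i k) := by
    filter_upwards [Ioo_mem_nhdsGT hε₀] with ε hε j i k
    exact (hA ε ⟨hε.1.le, hε.2⟩ j i k).sub hab (hA 0 ⟨le_rfl, hε₀⟩ j i k)
  have hL : ∀ p : Fin r, Tendsto (fun ε => mHolNorm a b n α (fun t => ∑ j, (A ε j t - A 0 j t) *
      mDeriv a b j (fun s : ℝ => s ^ (p : ℕ) • (1 : Matrix (Fin m) (Fin m) ℂ)) t))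
      (𝓝[>] 0) (𝓝 0) := fun p => by
    simpa only [LopM_sub_LopM] using h _ (mHolMem_pow_smul_one hab hα1 (n + r) p)
  exact fun j => tendsto_mHolNorm_zero fun i k => (holTendstoZero_coeff hab hα1 hC hL j i k).2

/-- If L(ε)Z converges to L(0)Z in the matrix Hölder space for every matrix-valued
function Z of class C^{n+r,α}, then Limit Condition (I) holds. -/
theorem matrix_strong_convergence_implies_condI
    (a b : ℝ) (hab : a < b) (n : ℕ) (α : ℝ) (hα0 : 0 < α) (hα1 : α ≤ 1)
    (m r : ℕ) (hm : 1 ≤ m) (hr : 2 ≤ r) (ε₀ : ℝ) (hε₀ : 0 < ε₀)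
    (A : ℝ → Fin r → ℝ → Matrix (Fin m) (Fin m) ℂ)
    (hA : ∀ ε ∈ Set.Ico (0 : ℝ) ε₀, ∀ j, mHolMem a b n α (A ε j))
    (h : ∀ Z : ℝ → Matrix (Fin m) (Fin m) ℂ, mHolMem a b (n + r) α Z →
      Tendsto
        (fun ε => mHolNorm a b n α (fun t => LopM a b r (A ε) Z t - LopM a b r (A 0) Z t))
        (nhdsWithin 0 (Set.Ioi 0)) (nhds 0)) :
    CondI a b n α r m A :=
  matrix_strong_convergence_implies_condI_general a b hab n α hα1 m r ε₀ hε₀ A hA h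
end
end

section
/- Fix ε ∈ [0, ε₀) and let Y ∈ (C^{n+r,α})^{m×rm} be a matrix-valued function satisfying the homogeneous matrix differential system Y^{(r)}(t) + Σ_{j=1}^{r} A_{r−j}(t,ε) Y^{(r−j)}(t) = O_{m×rm} for a ≤ t ≤ b, together with the matrix boundary condition [B(ε)Y] = I_{rm}, where [B(ε)Y] denotes the rm×rm matrix whose k-th column is B(ε) applied to the k-th column of Y. Define X(t) ∈ ℂ^{rm×rm} as the block matrix whose i-th block row is Y^{(i−1)}(t) for i = 1,…,r. Then det X(t) ≠ 0 for every t ∈ [a,b]. -/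
open Set Filter Topology

noncomputable section

/-! If `X(t₀) d = 0` with `d ≠ 0`, then `y = Y d` solves `L y = 0` with vanishing Cauchy data
`y(t₀) = ⋯ = y⁽ʳ⁻¹⁾(t₀) = 0`. The companion vector `(y, y', …, y⁽ʳ⁻¹⁾)` then satisfies
`‖z'‖ ≤ K ‖z‖` on `[a,b]`, so Grönwall's inequality forces `y ≡ 0` there, and the boundedness of
`B` in the Hölder norm gives `B y = 0`. But `B y = [B Y] d = d`. -/

open scoped Matrix

theorem eqOn_zero_of_norm_derivWithin_le_mul_norm_right {E : Type*} [NormedAddCommGroup E]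
    [NormedSpace ℝ E] {f f' : ℝ → E} {K a b : ℝ} (hf : ContinuousOn f (Icc a b))
    (hf' : ∀ t ∈ Icc a b, HasDerivWithinAt f (f' t) (Icc a b) t)
    (bound : ∀ t ∈ Icc a b, ‖f' t‖ ≤ K * ‖f t‖) (ha : f a = 0) :
    EqOn f 0 (Icc a b) :=
  eq_zero_of_abs_deriv_le_mul_abs_self_of_eq_zero_right hf
    (fun t ht => (hf' t (Ico_subset_Icc_self ht)).mono_of_mem_nhdsWithin
      (Icc_mem_nhdsGE_of_mem ht))
    ha fun t ht => bound t (Ico_subset_Icc_self ht)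

theorem eqOn_zero_of_norm_derivWithin_le_mul_norm {E : Type*} [NormedAddCommGroup E]
    [NormedSpace ℝ E] {f f' : ℝ → E} {K a b t₀ : ℝ} (hf : ContinuousOn f (Icc a b))
    (hf' : ∀ t ∈ Icc a b, HasDerivWithinAt f (f' t) (Icc a b) t)
    (bound : ∀ t ∈ Icc a b, ‖f' t‖ ≤ K * ‖f t‖) (ht₀ : t₀ ∈ Icc a b) (h₀ : f t₀ = 0) :
    EqOn f 0 (Icc a b) := by
  intro t ht
  rcases le_total t₀ t with h | h
  · have hsub : Icc t₀ b ⊆ Icc a b := Icc_subset_Icc_left ht₀.1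
    exact eqOn_zero_of_norm_derivWithin_le_mul_norm_right (hf.mono hsub)
      (fun s hs => (hf' s (hsub hs)).mono hsub) (fun s hs => bound s (hsub hs)) h₀ ⟨h, ht.2⟩
  · -- reflect `[a, t₀]` to `[-t₀, -a]`
    have hneg : MapsTo Neg.neg (Icc (-t₀) (-a)) (Icc a b) := fun s hs =>
      ⟨le_neg.mp hs.2, (neg_le.mp hs.1).trans ht₀.2⟩
    have := eqOn_zero_of_norm_derivWithin_le_mul_norm_right (f := f ∘ Neg.neg)
      (f' := fun s => -f' (-s)) (K := K) (hf.comp continuousOn_neg hneg)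
      (fun s hs => by
        simpa using (hf' (-s) (hneg hs)).scomp s (hasDerivWithinAt_neg s (Icc (-t₀) (-a))) hneg)
      (fun s hs => by simpa using bound (-s) (hneg hs)) (by simpa using h₀)
      (show -t ∈ Icc (-t₀) (-a) from ⟨neg_le_neg h, neg_le_neg ht.1⟩)
    simpa using this

section

attribute [local instance] Matrix.linftyOpNormedAddCommGroup

theorem exists_norm_mulVec_le_of_continuousOn {p k l : ℕ} {s : Set ℝ} (hs : IsCompact s)
    {A : Fin p → ℝ → Matrix (Fin k) (Fin l) ℂ}
    (hA : ∀ q i j, ContinuousOn (fun t => A q t i j) s) :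
    ∃ C, 0 ≤ C ∧ ∀ t ∈ s, ∀ q (v : Fin l → ℂ), ‖A q t *ᵥ v‖ ≤ C * ‖v‖ := by
  have hcont : ContinuousOn (fun t q => A q t) s :=
    continuousOn_pi.2 fun q => continuousOn_pi.2 fun i => continuousOn_pi.2 (hA q i)
  obtain ⟨C, hC⟩ := hs.exists_bound_of_continuousOn hcont
  refine ⟨max C 0, le_max_right _ _, fun t ht q v => (Matrix.linfty_opNorm_mulVec _ _).trans ?_⟩
  gcongr
  exact (norm_le_pi_norm (fun q => A q t) q).trans ((hC t ht).trans (le_max_left _ _))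

end

theorem vDeriv_eq_zero_of_lop_eq_zero {a b : ℝ} (hab : a < b) {r m : ℕ}
    {A : Fin r → ℝ → Matrix (Fin m) (Fin m) ℂ}
    (hA : ∀ l i j, ContinuousOn (fun t => A l t i j) (Icc a b))
    {y : ℝ → Fin m → ℂ} (hy : ∀ j, ContDiffOn ℝ r (fun t => y t j) (Icc a b))
    (hLy : ∀ t ∈ Icc a b, Lop a b r A y t = 0) {t₀ : ℝ} (ht₀ : t₀ ∈ Icc a b)
    (hy₀ : ∀ i < r, vDeriv a b i y t₀ = 0) :
    ∀ t ∈ Icc a b, ∀ i < r, vDeriv a b i y t = 0 := by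
  obtain ⟨C, hC0, hC⟩ := exists_norm_mulVec_le_of_continuousOn isCompact_Icc hA
  set z : ℝ → Fin r → Fin m → ℂ := fun t i => vDeriv a b i y t
  set z' : ℝ → Fin r → Fin m → ℂ := fun t i => vDeriv a b (i + 1) y t
  have hz' : ∀ t ∈ Icc a b, HasDerivWithinAt z (z' t) (Icc a b) t := by
    intro t ht
    refine hasDerivWithinAt_pi.2 fun i => hasDerivWithinAt_pi.2 fun j => ?_
    simp only [z, z', vDeriv, iteratedDerivWithin_succ]
    exact ((hy j).differentiableOn_iteratedDerivWithin (by exact_mod_cast i.isLt)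
      (uniqueDiffOn_Icc hab) t ht).hasDerivWithinAt
  have hbound : ∀ t ∈ Icc a b, ‖z' t‖ ≤ max 1 (r * C) * ‖z t‖ := by
    intro t ht
    refine (pi_norm_le_iff_of_nonneg (by positivity)).2 fun i => ?_
    by_cases hi : (i : ℕ) + 1 < r
    · calc ‖z' t i‖ = ‖z t ⟨i + 1, hi⟩‖ := rfl
        _ ≤ ‖z t‖ := norm_le_pi_norm _ _
        _ ≤ _ := le_mul_of_one_le_left (norm_nonneg _) (le_max_left _ _)
    · have hir : (i : ℕ) + 1 = r := by omega
      have hLyt := hLy t ht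
      rw [Lop, add_eq_zero_iff_eq_neg] at hLyt
      calc ‖z' t i‖ = ‖∑ l, A l t *ᵥ z t l‖ := by simp [z', hir, hLyt, z]
        _ ≤ ∑ l : Fin r, C * ‖z t‖ := norm_sum_le_of_le _ fun l _ =>
            (hC t ht l _).trans (by gcongr; exact norm_le_pi_norm _ _)
        _ = r * C * ‖z t‖ := by simp; ring
        _ ≤ _ := by gcongr; exact le_max_right _ _
  have hz := eqOn_zero_of_norm_derivWithin_le_mul_norm
    (fun t ht => (hz' t ht).continuousWithinAt) hz' hbound ht₀ (funext fun i => hy₀ i i.isLt)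
  exact fun t ht i hi => congrFun (hz ht) ⟨i, hi⟩

theorem vDeriv_zero (a b : ℝ) {k : ℕ} (y : ℝ → Fin k → ℂ) : vDeriv a b 0 y = y := by
  funext t i
  simp [vDeriv]

theorem vDeriv_mulVec {a b : ℝ} (hab : a < b) {p k l : ℕ} {Y : ℝ → Matrix (Fin k) (Fin l) ℂ}
    (hY : ∀ i j, ContDiffOn ℝ p (fun t => Y t i j) (Icc a b)) (d : Fin l → ℂ) {t : ℝ}
    (ht : t ∈ Icc a b) :
    vDeriv a b p (fun s => Y s *ᵥ d) t = mDeriv a b p Y t *ᵥ d := by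
  funext i
  simp only [vDeriv, mDeriv, Matrix.mulVec, dotProduct]
  rw [iteratedDerivWithin_fun_sum ht (uniqueDiffOn_Icc hab)
    fun j _ => ((hY i j).mul contDiffOn_const) t ht]
  simp_rw [mul_comm _ (d _), iteratedDerivWithin_const_mul_field]

theorem lop_mulVec {a b : ℝ} (hab : a < b) {r m l : ℕ} (A : Fin r → ℝ → Matrix (Fin m) (Fin m) ℂ)
    {Y : ℝ → Matrix (Fin m) (Fin l) ℂ} (hY : ∀ i j, ContDiffOn ℝ r (fun t => Y t i j) (Icc a b))
    (d : Fin l → ℂ) {t : ℝ} (ht : t ∈ Icc a b) :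
    Lop a b r A (fun s => Y s *ᵥ d) t = LopM a b r A Y t *ᵥ d := by
  have hY' : ∀ p ≤ r, vDeriv a b p (fun s => Y s *ᵥ d) t = mDeriv a b p Y t *ᵥ d :=
    fun p hp => vDeriv_mulVec hab (fun i j => (hY i j).of_le (by exact_mod_cast hp)) d ht
  simp only [Lop, LopM, hY' r le_rfl, fun q : Fin r => hY' q q.isLt.le, Matrix.add_mulVec,
    Matrix.sum_mulVec, Matrix.mulVec_mulVec]

theorem linearMap_apply_mulVec {m l N : ℕ} (B : (ℝ → Fin m → ℂ) →ₗ[ℂ] (Fin N → ℂ))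
    (Y : ℝ → Matrix (Fin m) (Fin l) ℂ) (d : Fin l → ℂ) :
    B (fun t => Y t *ᵥ d) = (Matrix.of fun i k => B (fun t j => Y t j k) i) *ᵥ d := by
  have hcols : (fun t => Y t *ᵥ d) = ∑ k, d k • fun t j => Y t j k := by
    funext t j
    simp [Matrix.mulVec, dotProduct, Finset.sum_apply, mul_comm]
  funext i
  simp [hcols, Matrix.mulVec, dotProduct, Finset.sum_apply, mul_comm]

theorem iteratedDerivWithin_eq_zero_of_eqOn_zero {s : Set ℝ} {x : ℝ → ℂ} (hx : EqOn x 0 s)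
    (p : ℕ) {t : ℝ} (ht : t ∈ s) : iteratedDerivWithin p x s t = 0 := by
  rw [iteratedDerivWithin_congr hx ht, Pi.zero_def, iteratedDerivWithin_const, ite_self]

theorem holMem_of_eqOn_zero {a b : ℝ} {n : ℕ} {α : ℝ} {x : ℝ → ℂ} (hx : EqOn x 0 (Icc a b)) :
    HolMem a b n α x :=
  ⟨contDiffOn_const.congr hx, 0, fun t₁ ht₁ t₂ ht₂ _ => by
    simp [iteratedDerivWithin_eq_zero_of_eqOn_zero hx _ ht₁,
      iteratedDerivWithin_eq_zero_of_eqOn_zero hx _ ht₂]⟩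

theorem holNorm_eq_zero_of_eqOn_zero {a b : ℝ} {n : ℕ} {α : ℝ} {x : ℝ → ℂ}
    (hx : EqOn x 0 (Icc a b)) : holNorm a b n α x = 0 := by
  have hsSup : ∀ S : Set ℝ, (∀ s ∈ S, s = 0) → sSup S = 0 := fun S hS =>
    le_antisymm (Real.sSup_nonpos fun s hs => (hS s hs).le)
      (Real.sSup_nonneg fun s hs => (hS s hs).ge)
  have hd := iteratedDerivWithin_eq_zero_of_eqOn_zero hx
  unfold holNorm holSemiNorm
  rw [Finset.sum_eq_zero fun j _ => hsSup _ ?_, hsSup _ ?_, add_zero]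
  · rintro s ⟨t₁, ht₁, t₂, ht₂, -, rfl⟩
    simp [hd _ ht₁, hd _ ht₂]
  · rintro s ⟨t, ht, rfl⟩
    simp [hd _ ht]

theorem apply_eq_zero_of_eqOn_zero {F : Type*} [NormedAddCommGroup F] {a b : ℝ} {n : ℕ} {α : ℝ}
    {k : ℕ} {B : (ℝ → Fin k → ℂ) → F}
    (hB : ∃ K : ℝ, ∀ y, vHolMem a b n α y → ‖B y‖ ≤ K * vHolNorm a b n α y)
    {y : ℝ → Fin k → ℂ} (hy : EqOn y 0 (Icc a b)) : B y = 0 := by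
  obtain ⟨K, hK⟩ := hB
  have hyi : ∀ i, EqOn (fun t => y t i) 0 (Icc a b) := fun i t ht => congrFun (hy ht) i
  have hnorm : vHolNorm a b n α y = 0 :=
    Finset.sum_eq_zero fun i _ => holNorm_eq_zero_of_eqOn_zero (hyi i)
  simpa [hnorm] using hK y fun i => holMem_of_eqOn_zero (hyi i)

theorem block_wronskian_nonsingular_general
    (a b : ℝ) (hab : a < b) (n : ℕ) (α : ℝ)
    (m r : ℕ)
    (A : Fin r → ℝ → Matrix (Fin m) (Fin m) ℂ)
    (hA : ∀ j, mHolMem a b n α (A j))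
    (B : (ℝ → (Fin m → ℂ)) →ₗ[ℂ] (Fin (r * m) → ℂ))
    (hB : ∃ K : ℝ, ∀ y : ℝ → (Fin m → ℂ),
      vHolMem a b (n + r) α y → ‖B y‖ ≤ K * vHolNorm a b (n + r) α y)
    (Y : ℝ → Matrix (Fin m) (Fin (r * m)) ℂ)
    (hY : mHolMem a b (n + r) α Y)
    (hYeq : ∀ t ∈ Set.Icc a b, LopM a b r A Y t = 0)
    (hYbc : (Matrix.of fun i k : Fin (r * m) => B (fun t => fun j => Y t j k) i) = 1) :
    ∀ t ∈ Set.Icc a b,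
      (Matrix.of fun p q : Fin (r * m) =>
          mDeriv a b ((finProdFinEquiv.symm p).1 : ℕ) Y t (finProdFinEquiv.symm p).2 q).det
        ≠ 0 := by
  intro t₀ ht₀ hdet
  obtain ⟨d, hd, hXd⟩ := Matrix.exists_mulVec_eq_zero_iff.mpr hdet
  have hYr : ∀ i j, ContDiffOn ℝ r (fun t => Y t i j) (Icc a b) :=
    fun i j => (hY i j).1.of_le (by exact_mod_cast Nat.le_add_left r n)
  have hr : 0 < r := Nat.pos_of_ne_zero fun h => hd (funext fun k => absurd k.isLt (by simp [h]))
  have hy₀ : ∀ i < r, vDeriv a b i (fun t => Y t *ᵥ d) t₀ = 0 := fun i hi => by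
    rw [vDeriv_mulVec hab (fun p q => (hYr p q).of_le (by exact_mod_cast hi.le)) d ht₀]
    funext j
    simpa only [Matrix.mulVec, Matrix.of_apply, Equiv.symm_apply_apply, Pi.zero_apply] using
      congrFun hXd (finProdFinEquiv (⟨i, hi⟩, j))
  have hyr : ∀ j, ContDiffOn ℝ r (fun t => (Y t *ᵥ d) j) (Icc a b) := fun j => by
    simpa only [Matrix.mulVec, dotProduct] using
      ContDiffOn.sum fun k _ => (hYr j k).mul (contDiffOn_const (c := d k))
  have hy : EqOn (fun t => Y t *ᵥ d) 0 (Icc a b) := fun t ht => by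
    simpa only [vDeriv_zero, Pi.zero_apply] using vDeriv_eq_zero_of_lop_eq_zero hab
      (fun l i j => (hA l i j).1.continuousOn) hyr
      (fun t ht => by rw [lop_mulVec hab A hYr d ht, hYeq t ht, Matrix.zero_mulVec])
      ht₀ hy₀ t ht 0 hr
  have hBy := apply_eq_zero_of_eqOn_zero hB hy
  rw [linearMap_apply_mulVec, hYbc, Matrix.one_mulVec] at hBy
  exact hd hBy

/-- If the matrix-valued function Y solves the homogeneous matrix system with the
matrix boundary condition [B Y] = I, then the block matrix X(t), whose i-th block row
is the (i-1)-th derivative of Y, has nonzero determinant at every t in [a,b]. -/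
theorem block_wronskian_nonsingular
    (a b : ℝ) (hab : a < b) (n : ℕ) (α : ℝ) (hα0 : 0 < α) (hα1 : α ≤ 1)
    (m r : ℕ) (hm : 1 ≤ m) (hr : 2 ≤ r)
    (A : Fin r → ℝ → Matrix (Fin m) (Fin m) ℂ)
    (hA : ∀ j, mHolMem a b n α (A j))
    (B : (ℝ → (Fin m → ℂ)) →ₗ[ℂ] (Fin (r * m) → ℂ))
    (hB : ∃ K : ℝ, ∀ y : ℝ → (Fin m → ℂ),
      vHolMem a b (n + r) α y → ‖B y‖ ≤ K * vHolNorm a b (n + r) α y)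
    (Y : ℝ → Matrix (Fin m) (Fin (r * m)) ℂ)
    (hY : mHolMem a b (n + r) α Y)
    (hYeq : ∀ t ∈ Set.Icc a b, LopM a b r A Y t = 0)
    (hYbc : (Matrix.of fun i k : Fin (r * m) => B (fun t => fun j => Y t j k) i) = 1) :
    ∀ t ∈ Set.Icc a b,
      (Matrix.of fun p q : Fin (r * m) =>
          mDeriv a b ((finProdFinEquiv.symm p).1 : ℕ) Y t (finProdFinEquiv.symm p).2 q).det
        ≠ 0 :=
  block_wronskian_nonsingular_general a b hab n α m r A hA B hB Y hY hYeq hYbc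
end
end
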